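/- arXiv:2403.04944 — 7 statements merged into one kernel-verified Lean document; each statement's English description precedes it below -/
import Mathlib

section
/- For a, b, w > 0, q ∈ (0,1] with q²w ≤ a, and all t ∈ ℝ, the point (x(t), y(t)) with x(t) = -q²w·sin²t + cos t·√(a² - q⁴w²·sin²t) and y(t) = qb·sin t satisfies 2q²w·x(t)·y(t)² + q²b²·x(t)² + (a² + q⁴w²)·y(t)² - a²b²q² = 0. -/
/-! Writing `k = q²w` and `s = sin t`, the relation `x + k s² = cos t · √(a² - k² s²)` squares to
`x² + 2k s² x + (a² + k²) s² - a² = 0` by `cos² t = 1 - s²`; multiplying by `q²b²` and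
substituting `y = q b s` gives the curve equation. The radicand is nonnegative since
`0 ≤ k ≤ a`. -/

open Real

lemma sq_mul_sin_sq_le_sq {k a : ℝ} (hk : 0 ≤ k) (hka : k ≤ a) (t : ℝ) :
    k ^ 2 * sin t ^ 2 ≤ a ^ 2 :=
  calc k ^ 2 * sin t ^ 2 ≤ k ^ 2 * 1 := by gcongr; exact sin_sq_le_one t
    _ = k ^ 2 := mul_one _
    _ ≤ a ^ 2 := by gcongr

lemma egg_quadratic_of_sin_sq {k a : ℝ} (t : ℝ) (hR : k ^ 2 * sin t ^ 2 ≤ a ^ 2) :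
    let x := -k * sin t ^ 2 + cos t * √(a ^ 2 - k ^ 2 * sin t ^ 2)
    x ^ 2 + 2 * k * sin t ^ 2 * x + (a ^ 2 + k ^ 2) * sin t ^ 2 - a ^ 2 = 0 := by
  intro x
  have hsqrt : √(a ^ 2 - k ^ 2 * sin t ^ 2) ^ 2 = a ^ 2 - k ^ 2 * sin t ^ 2 :=
    sq_sqrt (sub_nonneg.mpr hR)
  linear_combination cos t ^ 2 * hsqrt
    + (a ^ 2 - k ^ 2 * sin t ^ 2) * cos_sq' t

theorem parametrization_on_curve_general (a b w q : ℝ) (hw : 0 < w) (hqa : q ^ 2 * w ≤ a) (t : ℝ) :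
    let x := -q ^ 2 * w * sin t ^ 2 + cos t * Real.sqrt (a ^ 2 - q ^ 4 * w ^ 2 * sin t ^ 2)
    let y := q * b * sin t
    2 * q ^ 2 * w * x * y ^ 2 + q ^ 2 * b ^ 2 * x ^ 2
      + (a ^ 2 + q ^ 4 * w ^ 2) * y ^ 2 - a ^ 2 * b ^ 2 * q ^ 2 = 0 := by
  intro x y
  have hk : (q ^ 2 * w) ^ 2 = q ^ 4 * w ^ 2 := by ring
  have hquad := egg_quadratic_of_sin_sq t (sq_mul_sin_sq_le_sq (by positivity) hqa t)
  rw [hk] at hquad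
  simp only [x, y]
  linear_combination q ^ 2 * b ^ 2 * hquad

theorem parametrization_on_curve (a b w q : ℝ) (ha : 0 < a) (hb : 0 < b)
    (hw : 0 < w) (hq0 : 0 < q) (hq1 : q ≤ 1) (hqa : q ^ 2 * w ≤ a) (t : ℝ) :
    let x := -q ^ 2 * w * sin t ^ 2 + cos t * Real.sqrt (a ^ 2 - q ^ 4 * w ^ 2 * sin t ^ 2)
    let y := q * b * sin t
    2 * q ^ 2 * w * x * y ^ 2 + q ^ 2 * b ^ 2 * x ^ 2
      + (a ^ 2 + q ^ 4 * w ^ 2) * y ^ 2 - a ^ 2 * b ^ 2 * q ^ 2 = 0 :=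
  parametrization_on_curve_general a b w q hw hqa t
end

section
/- Let a, b, w > 0, q ∈ (0,1] with k = q²w/a ∈ (0,1). Define A_{q,2} = -2∫₀^{π/2} y(t)x'(t) dt and A_{q,1} = -2∫_{π/2}^{π} y(t)x'(t) dt for the parametrization x(t) = -q²w sin²t + cos t√(a² - q⁴w² sin²t), y(t) = qb sin t. Then A_{q,2} - A_{q,1} = (8/3)·a·b·q·k = (8/3)·w·b·q³. -/
open Real MeasureTheory

/-!
Write `c = q²w`. The square-root term of `x` is odd about `t = π/2`, so
`x t + x (π - t) = -2c sin² t`, hence `x' t - x' (π - t) = -4c sin t cos t` without ever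
differentiating the square root. Since `y` is even about `π/2`, reflecting `t ↦ π - t` turns the
difference of the two areas into `-2 ∫₀^{π/2} y(t) (-4c sin t cos t) dt = 8/3 · qbc`.
-/

theorem intervalIntegral.integral_first_half_sub_integral_second_half {E : Type*}
    [NormedAddCommGroup E] [NormedSpace ℝ E] {f : ℝ → E} {c : ℝ}
    (hf₁ : IntervalIntegrable f volume 0 (c / 2))
    (hf₂ : IntervalIntegrable f volume (c / 2) c) :
    (∫ t in 0..c / 2, f t) - ∫ t in c / 2..c, f t = ∫ t in 0..c / 2, (f t - f (c - t)) := by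
  have hreflect : IntervalIntegrable (fun t => f (c - t)) volume 0 (c / 2) := by
    simpa [sub_half] using (hf₂.comp_sub_left c).symm
  rw [intervalIntegral.integral_sub hf₁ hreflect, intervalIntegral.integral_comp_sub_left,
    sub_half, sub_zero]

theorem deriv_sub_deriv_const_sub_of_add_eq {f s : ℝ → ℝ} {c s' t : ℝ}
    (hft : DifferentiableAt ℝ f t) (hfct : DifferentiableAt ℝ f (c - t))
    (hs : ∀ t, f t + f (c - t) = s t) (hs' : HasDerivAt s s' t) :
    deriv f t - deriv f (c - t) = s' := by
  have h : HasDerivAt (fun t => f t + f (c - t)) (deriv f t + -deriv f (c - t)) t :=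
    hft.hasDerivAt.add (hfct.hasDerivAt.comp_const_sub c t)
  rw [show (fun t => f t + f (c - t)) = s from funext hs, ← sub_eq_add_neg] at h
  exact h.unique hs'

noncomputable def eggCurveX (a c t : ℝ) : ℝ :=
  -c * sin t ^ 2 + cos t * √(a ^ 2 - c ^ 2 * sin t ^ 2)

section EggCurve

variable {a c : ℝ}

theorem contDiff_eggCurveX {n : WithTop ℕ∞} (h : c ^ 2 < a ^ 2) :
    ContDiff ℝ n (eggCurveX a c) := by
  have hpos : ∀ t, a ^ 2 - c ^ 2 * sin t ^ 2 ≠ 0 := fun t =>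
    (sub_pos.2 ((mul_le_of_le_one_right (sq_nonneg c) (sin_sq_le_one t)).trans_lt h)).ne'
  unfold eggCurveX
  fun_prop (disch := exact hpos)

theorem eggCurveX_add_eggCurveX_pi_sub (t : ℝ) :
    eggCurveX a c t + eggCurveX a c (π - t) = -2 * c * sin t ^ 2 := by
  simp only [eggCurveX, sin_pi_sub, cos_pi_sub]
  ring

theorem deriv_eggCurveX_sub_deriv_eggCurveX_pi_sub (h : c ^ 2 < a ^ 2) (t : ℝ) :
    deriv (eggCurveX a c) t - deriv (eggCurveX a c) (π - t) = -4 * c * sin t * cos t := by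
  have hs : HasDerivAt (fun t => -2 * c * sin t ^ 2) (-4 * c * sin t * cos t) t :=
    (((hasDerivAt_sin t).pow 2).const_mul (-2 * c)).congr_deriv (by push_cast; ring)
  have hdiff := (contDiff_eggCurveX (n := 1) h).differentiable one_ne_zero
  exact deriv_sub_deriv_const_sub_of_add_eq (hdiff t) (hdiff (π - t))
    eggCurveX_add_eggCurveX_pi_sub hs

theorem integral_mul_sin_mul_deriv_eggCurveX_sub (h : c ^ 2 < a ^ 2) (r : ℝ) :
    (∫ t in 0..π / 2, r * sin t * deriv (eggCurveX a c) t)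
      - ∫ t in π / 2..π, r * sin t * deriv (eggCurveX a c) t = -4 / 3 * r * c := by
  have hcont : Continuous fun t => r * sin t * deriv (eggCurveX a c) t := by
    have := (contDiff_eggCurveX (n := 1) h).continuous_deriv le_rfl
    fun_prop
  rw [intervalIntegral.integral_first_half_sub_integral_second_half (hcont.intervalIntegrable _ _)
    (hcont.intervalIntegrable _ _)]
  calc _ = ∫ t in 0..π / 2, -4 * r * c * (sin t ^ 2 * cos t) := by
        refine intervalIntegral.integral_congr fun t _ => ?_
        simp only [sin_pi_sub]
        rw [← mul_sub, deriv_eggCurveX_sub_deriv_eggCurveX_pi_sub h]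
        ring
    _ = -4 / 3 * r * c := by
        rw [intervalIntegral.integral_const_mul, integral_sin_sq_mul_cos]
        norm_num
        ring

end EggCurve

theorem area_difference_general (a b w q k : ℝ) (ha : 0 < a)
    (hk : k = q ^ 2 * w / a) (hk0 : 0 < k) (hk1 : k < 1) :
    let x : ℝ → ℝ := fun t =>
      -q ^ 2 * w * sin t ^ 2 + cos t * Real.sqrt (a ^ 2 - q ^ 4 * w ^ 2 * sin t ^ 2)
    let y : ℝ → ℝ := fun t => q * b * sin t
    (-2 * ∫ t in (0:ℝ)..(π / 2), y t * deriv x t)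
      - (-2 * ∫ t in (π / 2)..π, y t * deriv x t)
      = 8 / 3 * a * b * q * k
    ∧ (-2 * ∫ t in (0:ℝ)..(π / 2), y t * deriv x t)
      - (-2 * ∫ t in (π / 2)..π, y t * deriv x t)
      = 8 / 3 * w * b * q ^ 3 := by
  intro x y
  have hak : a * k = q ^ 2 * w := by rw [hk]; field_simp
  have hc : (q ^ 2 * w) ^ 2 < a ^ 2 := by
    rw [← hak, mul_pow]
    nlinarith [mul_lt_mul_of_pos_left (show k ^ 2 < 1 by nlinarith) (pow_pos ha 2)]
  have hx : x = eggCurveX a (q ^ 2 * w) := by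
    funext t
    simp only [x, eggCurveX, neg_mul]
    rw [show q ^ 4 * w ^ 2 = (q ^ 2 * w) ^ 2 by ring]
  have key := integral_mul_sin_mul_deriv_eggCurveX_sub hc (q * b)
  rw [← hx] at key
  constructor
  · linear_combination (-2) * key - 8 / 3 * b * q * hak
  · linear_combination (-2) * key

theorem area_difference (a b w q k : ℝ) (ha : 0 < a) (hb : 0 < b) (hw : 0 < w)
    (hq0 : 0 < q) (hq1 : q ≤ 1) (hk : k = q ^ 2 * w / a) (hk0 : 0 < k) (hk1 : k < 1) :
    let x : ℝ → ℝ := fun t =>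
      -q ^ 2 * w * sin t ^ 2 + cos t * Real.sqrt (a ^ 2 - q ^ 4 * w ^ 2 * sin t ^ 2)
    let y : ℝ → ℝ := fun t => q * b * sin t
    (-2 * ∫ t in (0:ℝ)..(π / 2), y t * deriv x t)
      - (-2 * ∫ t in (π / 2)..π, y t * deriv x t)
      = 8 / 3 * a * b * q * k
    ∧ (-2 * ∫ t in (0:ℝ)..(π / 2), y t * deriv x t)
      - (-2 * ∫ t in (π / 2)..π, y t * deriv x t)
      = 8 / 3 * w * b * q ^ 3 :=
  area_difference_general a b w q k ha hk hk0 hk1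
end

section
/- Let a, b, w > 0, q ∈ (0,1] with k = q²w/a ∈ (0,1). The total area A = -2∫₀^{π} y(t)x'(t) dt of the egg-shaped Hügelschäffer curve parametrized by x(t) = -q²w sin²t + cos t√(a² - q⁴w² sin²t), y(t) = qb sin t equals (4/3)·a·b·q·((1 - 1/k²)·K(k) + (1 + 1/k²)·E(k)). -/
/-!
Integrating by parts turns the area into `2qb ∫₀^π cos t · x t dt`. Folding `[0, π]` onto
`[0, π/2]` by `t ↦ π - t` cancels the odd part `-q²w sin²t cos t` of the integrand and, with
`q²w = k a`, leaves `4abq ∫₀^{π/2} cos²θ Δ θ` where `Δ θ = √(1 - k² sin²θ)`. That integral is a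
combination of `K k` and `E k` because `k² sin θ cos θ Δ θ` is a primitive of
`3k² cos²θ Δ θ - (1 + k²) Δ θ + (1 - k²) / Δ θ`.
-/

open Real

noncomputable def ellipticK (k : ℝ) : ℝ := ∫ θ in (0:ℝ)..(π / 2), 1 / Real.sqrt (1 - k ^ 2 * sin θ ^ 2)

noncomputable def ellipticE (k : ℝ) : ℝ := ∫ θ in (0:ℝ)..(π / 2), Real.sqrt (1 - k ^ 2 * sin θ ^ 2)

open intervalIntegral

theorem integral_eq_integral_left_half_add_reflect {f : ℝ → ℝ} {a b : ℝ}
    (hf : IntervalIntegrable f MeasureTheory.volume a b) :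
    ∫ t in a..b, f t = ∫ t in a..(a + b) / 2, (f t + f (a + b - t)) := by
  have hmid : (a + b) / 2 ∈ Set.uIcc a b := by
    rcases le_total a b with h | h
    · exact Set.mem_uIcc.2 (Or.inl ⟨by linarith, by linarith⟩)
    · exact Set.mem_uIcc.2 (Or.inr ⟨by linarith, by linarith⟩)
  have hleft := hf.mono_set (Set.uIcc_subset_uIcc Set.left_mem_uIcc hmid)
  have hright := hf.mono_set (Set.uIcc_subset_uIcc hmid Set.right_mem_uIcc)
  have hreflect : ∫ t in a..(a + b) / 2, f (a + b - t) = ∫ t in (a + b) / 2..b, f t := by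
    rw [integral_comp_sub_left]; congr 1 <;> ring
  have hright_reflect :
      IntervalIntegrable (fun t => f (a + b - t)) MeasureTheory.volume a ((a + b) / 2) := by
    have := (hright.comp_sub_left (a + b)).symm
    rwa [show a + b - b = a by ring, show a + b - (a + b) / 2 = (a + b) / 2 by ring] at this
  rw [integral_add hleft hright_reflect, hreflect,
    integral_add_adjacent_intervals hleft hright]

theorem integral_sin_mul_deriv_eq_neg_integral_cos_mul {f : ℝ → ℝ} (hf : ContDiff ℝ 1 f) :
    ∫ t in (0:ℝ)..π, sin t * deriv f t = -∫ t in (0:ℝ)..π, cos t * f t := by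
  rw [integral_mul_deriv_eq_deriv_mul (fun t _ => hasDerivAt_sin t)
    (fun t _ => (hf.differentiable one_ne_zero t).hasDerivAt)
    (continuous_cos.intervalIntegrable _ _) (hf.continuous_deriv_one.intervalIntegrable _ _)]
  simp

theorem one_sub_sq_mul_sin_sq_pos {k : ℝ} (hk : k ^ 2 < 1) (θ : ℝ) :
    0 < 1 - k ^ 2 * sin θ ^ 2 := by
  nlinarith [sin_sq_le_one θ, sq_nonneg k]

theorem hasDerivAt_sq_mul_sin_mul_cos_mul_sqrt {k : ℝ} (hk : k ^ 2 < 1) (θ : ℝ) :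
    HasDerivAt (fun θ => k ^ 2 * (sin θ * cos θ * √(1 - k ^ 2 * sin θ ^ 2)))
      (3 * k ^ 2 * (cos θ ^ 2 * √(1 - k ^ 2 * sin θ ^ 2))
        - (1 + k ^ 2) * √(1 - k ^ 2 * sin θ ^ 2) + (1 - k ^ 2) * (1 / √(1 - k ^ 2 * sin θ ^ 2))) θ := by
  have hpos := one_sub_sq_mul_sin_sq_pos hk θ
  have hinner : HasDerivAt (fun θ => 1 - k ^ 2 * sin θ ^ 2) (-(k ^ 2 * (2 * sin θ * cos θ))) θ := by
    simpa using (((hasDerivAt_sin θ).pow 2).const_mul (k ^ 2)).const_sub 1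
  refine ((((hasDerivAt_sin θ).mul (hasDerivAt_cos θ)).mul (hinner.sqrt hpos.ne')).const_mul
    (k ^ 2)).congr_deriv ?_
  have hsq : √(1 - k ^ 2 * sin θ ^ 2) ^ 2 = 1 - k ^ 2 * sin θ ^ 2 := sq_sqrt hpos.le
  have hΔ : √(1 - k ^ 2 * sin θ ^ 2) ≠ 0 := (sqrt_pos.2 hpos).ne'
  simp only [Pi.mul_apply]
  field_simp
  linear_combination (k ^ 2 * (1 - 2 * cos θ ^ 2 - sin θ ^ 2) + 1) * hsq
    + (k ^ 2 * (k ^ 2 * sin θ ^ 2 - 2)) * sin_sq_add_cos_sq θ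

theorem integral_cos_sq_mul_sqrt_one_sub_sq_mul_sin_sq {k : ℝ} (hk : k ^ 2 < 1) :
    3 * k ^ 2 * ∫ θ in (0:ℝ)..π / 2, cos θ ^ 2 * √(1 - k ^ 2 * sin θ ^ 2)
      = (1 + k ^ 2) * ellipticE k - (1 - k ^ 2) * ellipticK k := by
  have hΔ : Continuous fun θ => √(1 - k ^ 2 * sin θ ^ 2) := by fun_prop
  have hinv : Continuous fun θ => 1 / √(1 - k ^ 2 * sin θ ^ 2) :=
    continuous_const.div hΔ fun θ => (sqrt_pos.2 (one_sub_sq_mul_sin_sq_pos hk θ)).ne'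
  have hftc := integral_eq_sub_of_hasDerivAt (a := 0) (b := π / 2)
    (fun θ _ => hasDerivAt_sq_mul_sin_mul_cos_mul_sqrt hk θ)
    (Continuous.intervalIntegrable (by fun_prop) _ _)
  rw [integral_add, integral_sub, integral_const_mul, integral_const_mul, integral_const_mul]
    at hftc
  · simp only [cos_pi_div_two, sin_zero, mul_zero, zero_mul, sub_zero] at hftc
    rw [ellipticE, ellipticK]
    linarith
  all_goals exact Continuous.intervalIntegrable (by fun_prop) _ _

-- The abscissa `x` of the egg curve, with `c = q²w`.
noncomputable def hugelschafferX (a c t : ℝ) : ℝ :=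
  -c * sin t ^ 2 + cos t * √(a ^ 2 - c ^ 2 * sin t ^ 2)

theorem contDiff_hugelschafferX {a c : ℝ} (hca : c ^ 2 < a ^ 2) :
    ContDiff ℝ 1 (hugelschafferX a c) := by
  refine (by fun_prop : ContDiff ℝ 1 fun t => -c * sin t ^ 2).add
    (contDiff_cos.mul (ContDiff.sqrt (by fun_prop) fun t => ?_))
  nlinarith [sin_sq_le_one t, sq_nonneg c]

theorem cos_mul_hugelschafferX_add_reflect (a c t : ℝ) :
    cos t * hugelschafferX a c t + cos (π - t) * hugelschafferX a c (π - t)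
      = 2 * (cos t ^ 2 * √(a ^ 2 - c ^ 2 * sin t ^ 2)) := by
  simp only [hugelschafferX, cos_pi_sub, sin_pi_sub]
  ring

theorem sqrt_sq_sub_sq_mul_sin_sq {a : ℝ} (ha : 0 ≤ a) (k t : ℝ) :
    √(a ^ 2 - (k * a) ^ 2 * sin t ^ 2) = a * √(1 - k ^ 2 * sin t ^ 2) := by
  rw [show a ^ 2 - (k * a) ^ 2 * sin t ^ 2 = a ^ 2 * (1 - k ^ 2 * sin t ^ 2) by ring,
    sqrt_mul (sq_nonneg a), sqrt_sq ha]

theorem area_egg_general (a b w q k : ℝ) (ha : 0 < a)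
    (hk : k = q ^ 2 * w / a) (hk0 : 0 < k) (hk1 : k < 1) :
    let x : ℝ → ℝ := fun t =>
      -q ^ 2 * w * sin t ^ 2 + cos t * Real.sqrt (a ^ 2 - q ^ 4 * w ^ 2 * sin t ^ 2)
    let y : ℝ → ℝ := fun t => q * b * sin t
    (-2 * ∫ t in (0:ℝ)..π, y t * deriv x t)
      = 4 / 3 * a * b * q * ((1 - 1 / k ^ 2) * ellipticK k + (1 + 1 / k ^ 2) * ellipticE k) := by
  intro x y
  have hc : q ^ 2 * w = k * a := by rw [hk]; field_simp
  have hx : x = hugelschafferX a (k * a) := by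
    funext t
    simp only [x, hugelschafferX, ← hc]
    ring_nf
  have hk2 : k ^ 2 < 1 := by nlinarith
  have hca : (k * a) ^ 2 < a ^ 2 := by nlinarith [mul_pos ha ha]
  calc -2 * ∫ t in (0:ℝ)..π, y t * deriv x t
      = -2 * (q * b) * ∫ t in (0:ℝ)..π, sin t * deriv (hugelschafferX a (k * a)) t := by
        simp only [y, hx, mul_assoc, integral_const_mul]
    _ = 2 * (q * b) * ∫ t in (0:ℝ)..π / 2,
          (cos t * hugelschafferX a (k * a) t + cos (π - t) * hugelschafferX a (k * a) (π - t)) := by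
        rw [integral_sin_mul_deriv_eq_neg_integral_cos_mul (contDiff_hugelschafferX hca),
          integral_eq_integral_left_half_add_reflect, zero_add]
        · ring
        · exact (continuous_cos.mul (contDiff_hugelschafferX hca).continuous).intervalIntegrable _ _
    _ = 2 * (q * b) * (2 * a * ∫ t in (0:ℝ)..π / 2, cos t ^ 2 * √(1 - k ^ 2 * sin t ^ 2)) := by
        have hfactor (t : ℝ) : 2 * (cos t ^ 2 * (a * √(1 - k ^ 2 * sin t ^ 2)))
            = 2 * a * (cos t ^ 2 * √(1 - k ^ 2 * sin t ^ 2)) := by ring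
        simp only [cos_mul_hugelschafferX_add_reflect, sqrt_sq_sub_sq_mul_sin_sq ha.le, hfactor,
          integral_const_mul]
    _ = 4 / 3 * a * b * q * ((1 + k ^ 2) * ellipticE k - (1 - k ^ 2) * ellipticK k) / k ^ 2 := by
        rw [← integral_cos_sq_mul_sqrt_one_sub_sq_mul_sin_sq hk2]
        field_simp
        ring
    _ = _ := by
        field_simp
        ring

theorem area_egg (a b w q k : ℝ) (ha : 0 < a) (hb : 0 < b) (hw : 0 < w)
    (hq0 : 0 < q) (hq1 : q ≤ 1) (hk : k = q ^ 2 * w / a) (hk0 : 0 < k) (hk1 : k < 1) :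
    let x : ℝ → ℝ := fun t =>
      -q ^ 2 * w * sin t ^ 2 + cos t * Real.sqrt (a ^ 2 - q ^ 4 * w ^ 2 * sin t ^ 2)
    let y : ℝ → ℝ := fun t => q * b * sin t
    (-2 * ∫ t in (0:ℝ)..π, y t * deriv x t)
      = 4 / 3 * a * b * q * ((1 - 1 / k ^ 2) * ellipticK k + (1 + 1 / k ^ 2) * ellipticE k) :=
  area_egg_general a b w q k ha hk hk0 hk1
end

section
/- For x ∈ (-1,1), K(x) = (π/2)·∑_{i=0}^{∞} ((2i-1)!!/(2i)!!)²·x^{2i}, where K is the complete elliptic integral of the first kind. -/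
/-!
With `t = x² sin² θ` the integrand of `K(x)` is `(1 - t)^(-1/2)`, whose binomial coefficients are
`(-1)ⁿ (-1/2 choose n) = (2n-1)‼/(2n)‼`. As `0 ≤ t ≤ x² < 1`, each term is bounded by its value at
`θ = π/2`, a summable majorant, so the series integrates termwise; the Wallis integral
`∫₀^{π/2} sin^{2n} θ dθ = (π/2) (2n-1)‼/(2n)‼` then supplies the second factor `(2n-1)‼/(2n)‼`.
-/

open Real

/-- At `n = 0` the truncated subtraction gives `0‼ = 1`, matching the convention `(-1)‼ = 1`. -/
noncomputable def wallisRatio (n : ℕ) : ℝ :=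
  ((2 * n - 1).doubleFactorial : ℝ) / (2 * n).doubleFactorial

lemma wallisRatio_zero : wallisRatio 0 = 1 := by simp [wallisRatio]

lemma wallisRatio_succ (n : ℕ) :
    wallisRatio (n + 1) = wallisRatio n * ((2 * n + 1) / (2 * n + 2)) := by
  have hodd : 2 * (n + 1) - 1 = 2 * n + 1 := by omega
  rw [wallisRatio, wallisRatio, hodd, Nat.doubleFactorial_add_one, mul_add_one,
    Nat.doubleFactorial_add_two]
  push_cast
  field_simp

lemma wallisRatio_nonneg (n : ℕ) : 0 ≤ wallisRatio n := by
  unfold wallisRatio; positivity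

lemma wallisRatio_eq_neg_one_pow_mul_choose (n : ℕ) :
    wallisRatio n = (-1) ^ n * Ring.choose (-1 / 2 : ℝ) n := by
  induction n with
  | zero => simp [wallisRatio_zero]
  | succ n ih =>
    have h := Ring.choose_smul_choose (-1 / 2 : ℝ) (Nat.le_add_right n 1)
    rw [Nat.choose_succ_self_right, Nat.add_sub_cancel_left, Ring.choose_one_right,
      nsmul_eq_mul] at h
    rw [wallisRatio_succ, ih, pow_succ]
    generalize Ring.choose (-1 / 2 : ℝ) n = a, Ring.choose (-1 / 2 : ℝ) (n + 1) = b at h ⊢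
    push_cast at h
    field_simp
    linear_combination 2 * h

lemma hasSum_wallisRatio_mul_pow {t : ℝ} (ht : |t| < 1) :
    HasSum (fun n => wallisRatio n * t ^ n) (1 / √(1 - t)) := by
  have hball : -t ∈ Metric.eball (0 : ℝ) 1 := by
    simpa [edist_dist, Real.dist_eq] using ht
  have h := (one_add_rpow_hasFPowerSeriesOnBall_zero (a := (-1 / 2 : ℝ))).hasSum hball
  simp only [binomialSeries, FormalMultilinearSeries.ofScalars_apply_eq, zero_add,
    smul_eq_mul] at h
  have hterm : (fun n => Ring.choose (-1 / 2 : ℝ) n * (-t) ^ n) =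
      fun n => wallisRatio n * t ^ n := by
    funext n
    rw [wallisRatio_eq_neg_one_pow_mul_choose, neg_pow]
    ring
  have hsum : (1 + -t) ^ (-1 / 2 : ℝ) = 1 / √(1 - t) := by
    rw [← sub_eq_add_neg, sqrt_eq_rpow, one_div, ← rpow_neg (by linarith [abs_lt.mp ht])]
    norm_num
  rwa [hterm, hsum] at h

lemma hasSum_wallisRatio_mul_sq_mul_sin_sq_pow {x : ℝ} (hx : |x| < 1) (θ : ℝ) :
    HasSum (fun n => wallisRatio n * (x ^ 2 * sin θ ^ 2) ^ n) (1 / √(1 - x ^ 2 * sin θ ^ 2)) := by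
  refine hasSum_wallisRatio_mul_pow ?_
  rw [abs_of_nonneg (by positivity)]
  nlinarith [sin_sq_le_one θ, sq_abs x, abs_nonneg x]

lemma integral_sin_pow_even_zero_pi_div_two (n : ℕ) :
    ∫ θ in (0 : ℝ)..(π / 2), sin θ ^ (2 * n) = π / 2 * wallisRatio n := by
  induction n with
  | zero => simp [wallisRatio_zero]
  | succ n ih =>
    rw [mul_add_one, integral_sin_pow, ih, wallisRatio_succ]
    simp only [sin_zero, cos_pi_div_two]
    push_cast
    ring

theorem ellipticK_series (x : ℝ) (hx : x ∈ Set.Ioo (-1:ℝ) 1) :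
    HasSum (fun i : ℕ =>
        π / 2 * ((Nat.doubleFactorial (2 * i - 1) : ℝ) / (Nat.doubleFactorial (2 * i))) ^ 2
          * x ^ (2 * i))
      (ellipticK x) := by
  have hx_abs : |x| < 1 := abs_lt.mpr hx
  have hx_sq : |x ^ 2| < 1 := by
    rw [abs_pow]; exact pow_lt_one₀ (abs_nonneg x) hx_abs two_ne_zero
  have hterms := intervalIntegral.hasSum_integral_of_dominated_convergence
    (F := fun n θ => wallisRatio n * (x ^ 2 * sin θ ^ 2) ^ n) (μ := MeasureTheory.volume)
    (a := 0) (b := π / 2) (fun n _ => wallisRatio n * (x ^ 2) ^ n)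
    (fun n => by fun_prop)
    (fun n => .of_forall fun θ _ => by
      rw [norm_of_nonneg (by have := wallisRatio_nonneg n; positivity), mul_pow]
      exact mul_le_mul_of_nonneg_left (mul_le_of_le_one_right (by positivity)
        (pow_le_one₀ (by positivity) (sin_sq_le_one θ))) (wallisRatio_nonneg n))
    (.of_forall fun _ _ => (hasSum_wallisRatio_mul_pow hx_sq).summable)
    intervalIntegrable_const
    (.of_forall fun θ _ => hasSum_wallisRatio_mul_sq_mul_sin_sq_pow hx_abs θ)
  refine hterms.congr_fun fun n => ?_
  simp only [mul_pow, ← pow_mul]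
  rw [intervalIntegral.integral_const_mul, intervalIntegral.integral_const_mul,
    integral_sin_pow_even_zero_pi_div_two, wallisRatio]
  ring
end

section
/- The series ∑_{i=1}^{∞} ((2i-1)!!/(2i)!!)²/(2i-1) converges and equals 1 - 2/π. -/
/-!
With `q n = (2n-1)‼ / (2n)‼`, the summand is `q (n+1)² / (2n+1)`, and the recursion
`q (n+1) = (2n+1)/(2n+2) · q n` makes it the difference `t n - t (n+1)` of `t n = (2n+1) q n²`.
The same recursion shows that `t n` is the reciprocal of the Wallis product `W n`, so the series
telescopes to `t 0 - lim t = 1 - 2/π`.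
-/

open Real Filter Topology Finset
open scoped Nat

theorem hasSum_of_nonneg_of_eq_sub_succ {f g : ℕ → ℝ} {L : ℝ} (hf : ∀ n, 0 ≤ f n)
    (hfg : ∀ n, f n = g n - g (n + 1)) (hg : Tendsto g atTop (𝓝 L)) : HasSum f (g 0 - L) := by
  rw [hasSum_iff_tendsto_nat_of_nonneg hf]
  have hpartial : ∀ N, ∑ i ∈ range N, f i = g 0 - g N := fun N => by
    simp only [hfg, sum_range_sub']
  simpa only [hpartial] using hg.const_sub (g 0)

namespace Real.Wallis

/-- `(2n-1)‼ / (2n)‼`; at `n = 0` the truncated `2 * 0 - 1 = 0` gives `0‼ = 1 = (-1)‼`. -/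
noncomputable def oddEvenRatio (n : ℕ) : ℝ := ((2 * n - 1)‼ : ℝ) / (2 * n)‼

noncomputable def tail (n : ℕ) : ℝ := (2 * n + 1) * oddEvenRatio n ^ 2

theorem oddEvenRatio_succ (n : ℕ) :
    oddEvenRatio (n + 1) = ((2 * n + 1)‼ : ℝ) / (2 * n + 2)‼ := by
  rw [oddEvenRatio, show 2 * (n + 1) - 1 = 2 * n + 1 by omega, mul_add_one]

theorem oddEvenRatio_succ_eq_mul (n : ℕ) :
    oddEvenRatio (n + 1) = (2 * n + 1) / (2 * n + 2) * oddEvenRatio n := by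
  rw [oddEvenRatio_succ, Nat.doubleFactorial_add_one, Nat.doubleFactorial_add_two, oddEvenRatio]
  push_cast
  rw [mul_div_mul_comm]

theorem tail_zero : tail 0 = 1 := by simp [tail, oddEvenRatio]

theorem tail_succ (n : ℕ) :
    tail (n + 1) = tail n * ((2 * n + 1) * (2 * n + 3) / (2 * n + 2) ^ 2) := by
  rw [tail, tail, oddEvenRatio_succ_eq_mul]
  push_cast
  field_simp
  ring

theorem tail_mul_W (n : ℕ) : tail n * W n = 1 := by
  induction n with
  | zero => simp [tail_zero, W]
  | succ n ih =>
    rw [tail_succ, W_succ, ← ih]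
    field_simp

theorem tail_eq_inv_W (n : ℕ) : tail n = (W n)⁻¹ :=
  eq_inv_of_mul_eq_one_left (tail_mul_W n)

theorem tendsto_tail : Tendsto tail atTop (𝓝 (2 / π)) := by
  rw [funext tail_eq_inv_W, ← inv_div]
  exact tendsto_W_nhds_pi_div_two.inv₀ (by positivity)

theorem tail_sub_tail_succ (n : ℕ) :
    tail n - tail (n + 1) = oddEvenRatio (n + 1) ^ 2 / (2 * n + 1) := by
  rw [tail, tail, oddEvenRatio_succ_eq_mul]
  push_cast
  field_simp
  ring

end Real.Wallis

open Real.Wallis in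
theorem series_one_sub_two_div_pi :
    HasSum (fun i : ℕ =>
        ((Nat.doubleFactorial (2 * i + 1) : ℝ) / (Nat.doubleFactorial (2 * i + 2))) ^ 2
          / (2 * (i : ℝ) + 1))
      (1 - 2 / π) := by
  rw [show (1 - 2 / π : ℝ) = tail 0 - 2 / π by rw [tail_zero]]
  refine hasSum_of_nonneg_of_eq_sub_succ (fun i => by positivity) (fun i => ?_) tendsto_tail
  rw [tail_sub_tail_succ, oddEvenRatio_succ]
end

section
/- The series ∑_{i=1}^{∞} (1/((2i-1)(i+1)))·((2i-1)!!/(2i)!!)² converges (e.g., by Raabe's test the terms are O(i^{-5/2})) and its sum equals 1 - 8/(3π). -/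
/-!
Write `r n = (2n-1)‼/(2n)‼`, so that the `i`-th term of the series is
`r (i+1)² / ((2i+1)(i+2))`. From `r (n+1) = r n (2n+1)/(2n+2)` the series telescopes:
its `N`-th partial sum is `1 - (4N+3)/(3N+3) · (2N+1) r N²`. By the same recursion
`(2N+1) r N²` is the reciprocal of the `N`-th Wallis product, which tends to `π/2`,
so the partial sums tend to `1 - (4/3)(2/π)`.
-/

open Real Filter Finset Topology
open scoped Nat

/-- At `n = 0` truncated subtraction gives `(2n-1)‼ = 0‼ = 1`, the convention `(-1)‼ = 1`. -/
noncomputable def oddDivEvenDoubleFactorial (n : ℕ) : ℝ :=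
  ((2 * n - 1)‼ : ℝ) / (2 * n)‼

local notation "r" => oddDivEvenDoubleFactorial

lemma oddDivEvenDoubleFactorial_zero : r 0 = 1 := by
  simp [oddDivEvenDoubleFactorial]

lemma oddDivEvenDoubleFactorial_add_one_eq_div (n : ℕ) :
    r (n + 1) = ((2 * n + 1)‼ : ℝ) / (2 * n + 2)‼ := by
  rw [oddDivEvenDoubleFactorial, show 2 * (n + 1) - 1 = 2 * n + 1 by omega,
    show 2 * (n + 1) = 2 * n + 2 by ring]

lemma oddDivEvenDoubleFactorial_add_one (n : ℕ) :
    r (n + 1) = r n * (2 * n + 1) / (2 * n + 2) := by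
  have h := (Nat.doubleFactorial_pos (2 * n)).ne'
  rw [oddDivEvenDoubleFactorial_add_one_eq_div, Nat.doubleFactorial_add_one,
    Nat.doubleFactorial_add_two, oddDivEvenDoubleFactorial]
  push_cast
  field_simp

lemma two_mul_add_one_mul_oddDivEvenDoubleFactorial_sq_mul_W (n : ℕ) :
    (2 * n + 1) * r n ^ 2 * Wallis.W n = 1 := by
  induction n with
  | zero => simp [oddDivEvenDoubleFactorial_zero, Wallis.W]
  | succ k ih =>
    rw [Wallis.W_succ, oddDivEvenDoubleFactorial_add_one]
    push_cast
    field_simp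
    linear_combination (2 * (k : ℝ) + 3) * ih

lemma tendsto_two_mul_add_one_mul_oddDivEvenDoubleFactorial_sq :
    Tendsto (fun n : ℕ => (2 * n + 1) * r n ^ 2) atTop (𝓝 (2 / π)) := by
  have hW := Wallis.tendsto_W_nhds_pi_div_two.inv₀ (by positivity)
  rw [inv_div] at hW
  refine hW.congr fun n => ?_
  rw [inv_eq_of_mul_eq_one_left (two_mul_add_one_mul_oddDivEvenDoubleFactorial_sq_mul_W n)]

lemma sum_range_oddDivEvenDoubleFactorial_sq (N : ℕ) :
    ∑ i ∈ range N, 1 / ((2 * (i : ℝ) + 1) * (i + 2)) * r (i + 1) ^ 2 =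
      1 - (3 + 4 * N) / (3 + 3 * N) * ((2 * N + 1) * r N ^ 2) := by
  induction N with
  | zero => simp [oddDivEvenDoubleFactorial_zero]
  | succ k ih =>
    rw [sum_range_succ, ih, oddDivEvenDoubleFactorial_add_one]
    push_cast
    field_simp
    ring

theorem series_one_sub_eight_div_three_pi :
    HasSum (fun i : ℕ =>
        1 / ((2 * (i : ℝ) + 1) * ((i : ℝ) + 2))
          * ((Nat.doubleFactorial (2 * i + 1) : ℝ) / (Nat.doubleFactorial (2 * i + 2))) ^ 2)
      (1 - 8 / (3 * π)) := by
  simp_rw [← oddDivEvenDoubleFactorial_add_one_eq_div]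
  rw [hasSum_iff_tendsto_nat_of_nonneg fun i => by positivity]
  simp_rw [sum_range_oddDivEvenDoubleFactorial_sq]
  have hlim := ((tendsto_add_mul_div_add_mul_atTop_nhds (3 : ℝ) 3 4 three_ne_zero).mul
    tendsto_two_mul_add_one_mul_oddDivEvenDoubleFactorial_sq).const_sub 1
  convert hlim using 2
  field_simp
  norm_num
end

section
/- Let f : (α, β) → ℝ be n-times differentiable with f^{(n)} increasing on (α, β), and suppose the one-sided limits f^{(i)}(α⁺) exist for i = 0,…,n and f(β⁻) exists. Then for every x ∈ (α, β), f(x) < T_{n-1}(x) + ((x-α)/(β-α))ⁿ·(f(β⁻) - T_{n-1}(β)), where T_{n-1}(x) = ∑_{i=0}^{n-1} f^{(i)}(α⁺)(x-α)^i/i! is the Taylor polynomial at α⁺ of degree n-1 (case n ≥ 1). -/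
/-!
Let `P` be the Taylor polynomial of degree `n - 1` at `α⁺`, completed by the multiple of
`(x - α)ⁿ` that makes `P(β) = f(β⁻)`, and put `g = f - P`. Then `g⁽ⁱ⁾(α⁺) = 0` for `i < n`,
`g(β⁻) = 0`, and `g⁽ⁿ⁾` differs from `f⁽ⁿ⁾` by a constant, so is strictly increasing.
Going down from `i = n`, every `g⁽ⁱ⁾` is negative to the left of any point where it is `≤ 0`:
otherwise the mean value theorem gives a point `ξ` with `g⁽ⁱ⁺¹⁾(ξ) ≤ 0`, so `g⁽ⁱ⁾` is strictly
decreasing on `(α, ξ)` from the value `0` at `α⁺`. For `g` itself, `g(β⁻) = 0` then rules out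
a point where `g ≥ 0`.
-/

open Set Filter Topology
open scoped Nat

theorem StrictAntiOn.lt_of_tendsto_nhdsGT {g : ℝ → ℝ} {a b l x : ℝ}
    (hg : StrictAntiOn g (Ioo a b)) (hl : Tendsto g (𝓝[>] a) (𝓝 l)) (hx : x ∈ Ioo a b) :
    g x < l := by
  obtain ⟨t, hat, htx⟩ := exists_between hx.1
  have ht : t ∈ Ioo a b := ⟨hat, htx.trans hx.2⟩
  calc g x < g t := hg ht hx htx
    _ ≤ l := ge_of_tendsto hl <| by
      filter_upwards [Ioo_mem_nhdsGT hat] with s hs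
      exact (hg ⟨hs.1, hs.2.trans ht.2⟩ ht hs.2).le

def NegLeftOfNonpos (h : ℝ → ℝ) (s : Set ℝ) : Prop :=
  ∀ x ∈ s, ∀ y ∈ s, x < y → h y ≤ 0 → h x < 0

theorem StrictMonoOn.negLeftOfNonpos {h : ℝ → ℝ} {s : Set ℝ} (hh : StrictMonoOn h s) :
    NegLeftOfNonpos h s :=
  fun _ hx _ hy hxy hy0 => (hh hx hy hxy).trans_le hy0

section SignPropagation

variable {g g' : ℝ → ℝ} {α β : ℝ}

theorem neg_of_deriv_nonpos (hd : ∀ t ∈ Ioo α β, HasDerivAt g (g' t) t)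
    (h0 : Tendsto g (𝓝[>] α) (𝓝 0)) (hQ : NegLeftOfNonpos g' (Ioo α β)) {ξ : ℝ}
    (hξ : ξ ∈ Ioo α β) (hξ0 : g' ξ ≤ 0) {x : ℝ} (hx : x ∈ Ioo α ξ) : g x < 0 := by
  have hsub : Ioo α ξ ⊆ Ioo α β := Ioo_subset_Ioo_right hξ.2.le
  have hanti : StrictAntiOn g (Ioo α ξ) := by
    refine strictAntiOn_of_deriv_neg (convex_Ioo α ξ)
      (fun t ht => (hd t (hsub ht)).continuousAt.continuousWithinAt) fun t ht => ?_
    rw [interior_Ioo] at ht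
    rw [(hd t (hsub ht)).deriv]
    exact hQ t (hsub ht) ξ hξ ht.2 hξ0
  exact hanti.lt_of_tendsto_nhdsGT h0 hx

theorem neg_of_le_of_lt (hd : ∀ t ∈ Ioo α β, HasDerivAt g (g' t) t)
    (h0 : Tendsto g (𝓝[>] α) (𝓝 0)) (hQ : NegLeftOfNonpos g' (Ioo α β)) {y z : ℝ}
    (hy : y ∈ Ioo α β) (hz : z ∈ Ioo α β) (hyz : y < z) (hle : g z ≤ g y) {x : ℝ}
    (hx : x ∈ Ioc α y) : g x < 0 := by
  have hsub : Icc y z ⊆ Ioo α β := Icc_subset_Ioo hy.1 hz.2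
  obtain ⟨ξ, hξ, hslope⟩ := exists_hasDerivAt_eq_slope g g' hyz
    (fun t ht => (hd t (hsub ht)).continuousAt.continuousWithinAt)
    (fun t ht => hd t (hsub (Ioo_subset_Icc_self ht)))
  have hξ0 : g' ξ ≤ 0 := by
    rw [hslope]
    exact div_nonpos_of_nonpos_of_nonneg (by linarith) (by linarith)
  exact neg_of_deriv_nonpos hd h0 hQ (hsub (Ioo_subset_Icc_self hξ)) hξ0
    ⟨hx.1, hx.2.trans_lt hξ.1⟩

theorem NegLeftOfNonpos.of_hasDerivAt (hd : ∀ t ∈ Ioo α β, HasDerivAt g (g' t) t)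
    (h0 : Tendsto g (𝓝[>] α) (𝓝 0)) (hQ : NegLeftOfNonpos g' (Ioo α β)) :
    NegLeftOfNonpos g (Ioo α β) := by
  intro x hx y hy hxy hy0
  by_contra hx0
  exact hx0 (neg_of_le_of_lt hd h0 hQ hx hy hxy (by linarith) ⟨hx.1, le_rfl⟩)

theorem neg_of_tendsto_zero (hd : ∀ t ∈ Ioo α β, HasDerivAt g (g' t) t)
    (hα : Tendsto g (𝓝[>] α) (𝓝 0)) (hβ : Tendsto g (𝓝[<] β) (𝓝 0))
    (hQ : NegLeftOfNonpos g' (Ioo α β)) {x : ℝ} (hx : x ∈ Ioo α β) : g x < 0 := by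
  by_contra hx0
  obtain ⟨y, hxy, hyβ⟩ := exists_between hx.2
  have hy : y ∈ Ioo α β := ⟨hx.1.trans hxy, hyβ⟩
  have hy0 : 0 < g y := by
    by_contra hy0
    exact hx0 (NegLeftOfNonpos.of_hasDerivAt hd hα hQ x hx y hy hxy (not_lt.mp hy0))
  obtain ⟨z, hzy, hz⟩ := ((hβ.eventually_lt_const hy0).and
    (Ioo_mem_nhdsLT hyβ)).exists
  exact hx0 (neg_of_le_of_lt hd hα hQ hy ⟨hx.1.trans (hxy.trans hz.1), hz.2⟩ hz.1 hzy.le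
    ⟨hx.1, hxy.le⟩)

theorem NegLeftOfNonpos.of_derivChain (g : ℕ → ℝ → ℝ) (n : ℕ)
    (hd : ∀ i < n, ∀ t ∈ Ioo α β, HasDerivAt (g i) (g (i + 1) t) t)
    (hα : ∀ i < n, Tendsto (g i) (𝓝[>] α) (𝓝 0)) (hmono : StrictMonoOn (g n) (Ioo α β)) :
    NegLeftOfNonpos (g 0) (Ioo α β) := by
  induction n generalizing g with
  | zero => exact hmono.negLeftOfNonpos
  | succ n ih =>
    exact .of_hasDerivAt (hd 0 n.succ_pos) (hα 0 n.succ_pos)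
      (ih (fun i => g (i + 1)) (fun i hi => hd (i + 1) (by omega))
        (fun i hi => hα (i + 1) (by omega)) hmono)

theorem neg_of_derivChain (g : ℕ → ℝ → ℝ) (n : ℕ)
    (hd : ∀ i < n + 1, ∀ t ∈ Ioo α β, HasDerivAt (g i) (g (i + 1) t) t)
    (hα : ∀ i < n + 1, Tendsto (g i) (𝓝[>] α) (𝓝 0)) (hβ : Tendsto (g 0) (𝓝[<] β) (𝓝 0))
    (hmono : StrictMonoOn (g (n + 1)) (Ioo α β)) {x : ℝ} (hx : x ∈ Ioo α β) : g 0 x < 0 :=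
  neg_of_tendsto_zero (hd 0 n.succ_pos) (hα 0 n.succ_pos) hβ
    (NegLeftOfNonpos.of_derivChain (fun i => g (i + 1)) n
      (fun i hi => hd (i + 1) (by omega)) (fun i hi => hα (i + 1) (by omega)) hmono) hx

end SignPropagation

noncomputable def taylorSum (a : ℕ → ℝ) (x₀ : ℝ) (m : ℕ) (x : ℝ) : ℝ :=
  ∑ i ∈ Finset.range m, a i * (x - x₀) ^ i / i !

theorem continuous_taylorSum (a : ℕ → ℝ) (x₀ : ℝ) (m : ℕ) : Continuous (taylorSum a x₀ m) := by
  unfold taylorSum; fun_prop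

theorem taylorSum_succ_self (a : ℕ → ℝ) (x₀ : ℝ) (m : ℕ) : taylorSum a x₀ (m + 1) x₀ = a 0 := by
  simp [taylorSum, Finset.sum_range_succ']

theorem taylorSum_update_self (a : ℕ → ℝ) (x₀ b x : ℝ) (m : ℕ) :
    taylorSum (Function.update a m b) x₀ (m + 1) x =
      taylorSum a x₀ m x + b * (x - x₀) ^ m / m ! := by
  rw [taylorSum, Finset.sum_range_succ, Function.update_self]
  congr 1
  exact Finset.sum_congr rfl fun i hi => by
    rw [Function.update_of_ne (Finset.mem_range.mp hi).ne]

theorem hasDerivAt_taylorSum (a : ℕ → ℝ) (x₀ : ℝ) (m : ℕ) (x : ℝ) :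
    HasDerivAt (taylorSum a x₀ (m + 1)) (taylorSum (fun i => a (i + 1)) x₀ m x) x := by
  have hterm (i : ℕ) : HasDerivAt (fun y => a i * (y - x₀) ^ i / i !)
      (a i * (i * (x - x₀) ^ (i - 1)) / i !) x := by
    simpa using ((((hasDerivAt_id x).sub_const x₀).pow i).const_mul (a i)).div_const (i ! : ℝ)
  have hsum := HasDerivAt.fun_sum (u := Finset.range (m + 1)) fun i _ => hterm i
  have hval : ∑ i ∈ Finset.range (m + 1), a i * (i * (x - x₀) ^ (i - 1)) / i !
      = taylorSum (fun i => a (i + 1)) x₀ m x := by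
    rw [Finset.sum_range_succ', taylorSum]
    simp only [CharP.cast_eq_zero, zero_mul, mul_zero, zero_div, add_zero]
    refine Finset.sum_congr rfl fun i _ => ?_
    rw [Nat.factorial_succ, Nat.add_sub_cancel]
    push_cast
    field_simp
  exact hval ▸ hsum

theorem lt_taylorSum_of_strictMonoOn_iteratedDeriv {f : ℝ → ℝ} {α β : ℝ} {n : ℕ} (a : ℕ → ℝ)
    (hdiff : ∀ i < n + 1, DifferentiableOn ℝ (iteratedDeriv i f) (Ioo α β))
    (hmono : StrictMonoOn (iteratedDeriv (n + 1) f) (Ioo α β))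
    (hα : ∀ i < n + 1, Tendsto (iteratedDeriv i f) (𝓝[>] α) (𝓝 (a i)))
    (hβ : Tendsto f (𝓝[<] β) (𝓝 (taylorSum a α (n + 2) β))) {x : ℝ} (hx : x ∈ Ioo α β) :
    f x < taylorSum a α (n + 2) x := by
  set g : ℕ → ℝ → ℝ := fun i y =>
    iteratedDeriv i f y - taylorSum (fun j => a (i + j)) α (n + 2 - i) y
  suffices g 0 x < 0 by simpa [g] using this
  refine neg_of_derivChain g n (fun i hi t ht => ?_) (fun i hi => ?_) ?_ ?_ hx
  · obtain ⟨k, hk, hk'⟩ : ∃ k, n + 2 - i = k + 1 ∧ n + 2 - (i + 1) = k :=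
      ⟨n + 1 - i, by omega, by omega⟩
    have hf : HasDerivAt (iteratedDeriv i f) (iteratedDeriv (i + 1) f t) t := by
      rw [iteratedDeriv_succ]
      exact ((hdiff i hi).differentiableAt (isOpen_Ioo.mem_nhds ht)).hasDerivAt
    simp only [g, hk, hk', Nat.add_right_comm i 1]
    exact hf.sub (hasDerivAt_taylorSum (fun j => a (i + j)) α k t)
  · obtain ⟨k, hk⟩ : ∃ k, n + 2 - i = k + 1 := ⟨n + 1 - i, by omega⟩
    have hT := ((continuous_taylorSum (fun j => a (i + j)) α (k + 1)).tendsto α).mono_left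
      (nhdsWithin_le_nhds (s := Ioi α))
    rw [taylorSum_succ_self, add_zero] at hT
    simpa [g, hk] using (hα i hi).sub hT
  · have hT := ((continuous_taylorSum a α (n + 2)).tendsto β).mono_left
      (nhdsWithin_le_nhds (s := Iio β))
    simpa [g] using hβ.sub hT
  · intro y hy z hz hyz
    simpa [g, show n + 2 - (n + 1) = 1 by omega, taylorSum] using hmono hy hz hyz

theorem wu_debnath_general (f : ℝ → ℝ) (α β : ℝ) (n : ℕ) (hn : 1 ≤ n)
    (hdiff : ∀ i < n, DifferentiableOn ℝ (iteratedDeriv i f) (Set.Ioo α β))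
    (hmono : StrictMonoOn (iteratedDeriv n f) (Set.Ioo α β))
    (L : ℕ → ℝ)
    (hL : ∀ i ≤ n, Filter.Tendsto (iteratedDeriv i f) (nhdsWithin α (Set.Ioi α)) (nhds (L i)))
    (M : ℝ)
    (hM : Filter.Tendsto f (nhdsWithin β (Set.Iio β)) (nhds M)) :
    ∀ x ∈ Set.Ioo α β,
      f x < (∑ i ∈ Finset.range n, L i * (x - α) ^ i / (Nat.factorial i))
        + ((x - α) / (β - α)) ^ n
          * (M - ∑ i ∈ Finset.range n, L i * (β - α) ^ i / (Nat.factorial i)) := by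
  intro x hx
  obtain ⟨m, rfl⟩ : ∃ m, n = m + 1 := ⟨n - 1, by omega⟩
  have hβα : β - α ≠ 0 := sub_ne_zero.mpr (hx.1.trans hx.2).ne'
  set a := Function.update L (m + 1)
    ((m + 1)! * (M - taylorSum L α (m + 1) β) / (β - α) ^ (m + 1))
  have ha (y : ℝ) : taylorSum a α (m + 2) y = taylorSum L α (m + 1) y
      + ((y - α) / (β - α)) ^ (m + 1) * (M - taylorSum L α (m + 1) β) := by
    rw [taylorSum_update_self, div_pow]
    field_simp
  have hfx := lt_taylorSum_of_strictMonoOn_iteratedDeriv a hdiff hmono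
    (fun i hi => by simpa [a, Function.update_of_ne hi.ne] using hL i hi.le)
    (by simpa [ha, div_self hβα] using hM) hx
  rwa [ha] at hfx

theorem wu_debnath (f : ℝ → ℝ) (α β : ℝ) (hαβ : α < β) (n : ℕ) (hn : 1 ≤ n)
    (hdiff : ∀ i < n, DifferentiableOn ℝ (iteratedDeriv i f) (Set.Ioo α β))
    (hmono : StrictMonoOn (iteratedDeriv n f) (Set.Ioo α β))
    (L : ℕ → ℝ)
    (hL : ∀ i ≤ n, Filter.Tendsto (iteratedDeriv i f) (nhdsWithin α (Set.Ioi α)) (nhds (L i)))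
    (M : ℝ)
    (hM : Filter.Tendsto f (nhdsWithin β (Set.Iio β)) (nhds M)) :
    ∀ x ∈ Set.Ioo α β,
      f x < (∑ i ∈ Finset.range n, L i * (x - α) ^ i / (Nat.factorial i))
        + ((x - α) / (β - α)) ^ n
          * (M - ∑ i ∈ Finset.range n, L i * (β - α) ^ i / (Nat.factorial i)) :=
  wu_debnath_general f α β n hn hdiff hmono L hL M hM
end
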